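/- arXiv:2103.09508 — 4 statements merged into one kernel-verified Lean document; each statement's English description precedes it below -/
import Mathlib

section
/- Let p be a prime and G a finite p-group. For any 𝔽_p[G]-module M and any m ∈ M, one has N_G·m = 0 if and only if m is a torsion element (equivalently, the annihilator of m in 𝔽_p[G] is a nonzero ideal). -/
/-!
The annihilator `I` of `m` is a left ideal of `k[G]`. If it is nonzero, it is a nonzero finite
`k`-vector space, so its order is divisible by `p`; the `p`-group `G` acting on `I` by left
multiplication fixes `0`, hence fixes some `x ≠ 0`. Left-invariant elements of `k[G]` have constant
coefficients, so `x` is a nonzero multiple of `N_G`, and `N_G ∈ I`. Conversely `N_G ≠ 0`.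
-/

open MonoidAlgebra

namespace MonoidAlgebra

variable {k G : Type*}

theorem coeff_sum_single_one [Semiring k] [Fintype G] (a : G) :
    (∑ g : G, single g (1 : k)).coeff a = 1 := by
  classical
  simp [coeff_sum, Finset.sum_apply', coeff_single, Finsupp.single_apply]

theorem sum_single_one_ne_zero [Semiring k] [Nontrivial k] [Fintype G] [Nonempty G] :
    ∑ g : G, single g (1 : k) ≠ 0 := by
  intro h
  simpa [h] using coeff_sum_single_one (k := k) (Classical.arbitrary G)

theorem eq_coeff_one_smul_sum_single_one [Semiring k] [Group G] [Fintype G] {x : k[G]}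
    (hx : ∀ g : G, single g (1 : k) * x = x) : x = x.coeff 1 • ∑ g : G, single g (1 : k) := by
  ext a
  rw [coeff_smul_apply, coeff_sum_single_one, smul_eq_mul, mul_one]
  conv_lhs => rw [← hx a, coeff_single_mul_apply, inv_mul_cancel, one_mul]

end MonoidAlgebra

theorem CharP.dvd_natCard_of_nontrivial (p : ℕ) (k V : Type*) [Field k] [Finite k] [CharP k p]
    [AddCommGroup V] [Module k V] [Finite V] [Nontrivial V] : p ∣ Nat.card V := by
  have := Fintype.ofFinite k
  have := Fintype.ofFinite V
  obtain ⟨n, -, hk⟩ := FiniteField.card k p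
  rw [Nat.card_eq_fintype_card, Module.card_eq_pow_finrank (K := k), hk, ← pow_mul]
  exact dvd_pow_self p (Nat.mul_ne_zero n.pos.ne' Module.finrank_pos.ne')

theorem IsPGroup.sum_single_one_mem_of_ne_bot {p : ℕ} [Fact p.Prime] {G : Type*} [Group G]
    [Fintype G] (hG : IsPGroup p G) {k : Type*} [Field k] [Finite k] [CharP k p] (I : Submodule k[G] k[G])
    (hI : I ≠ ⊥) : ∑ g : G, single g (1 : k) ∈ I := by
  let _ : MulAction G I := MulAction.compHom I (of k G)
  have : Finite k[G] := Module.finite_of_finite k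
  have : Nontrivial (I.restrictScalars k) :=
    Submodule.nontrivial_iff_ne_bot.mpr (by simpa using hI)
  have hdvd : p ∣ Nat.card I := CharP.dvd_natCard_of_nontrivial p k (I.restrictScalars k)
  have hzero : (0 : I) ∈ MulAction.fixedPoints G I := fun g => smul_zero (of k G g)
  obtain ⟨x, hx, hx0⟩ := hG.exists_fixed_point_of_prime_dvd_card_of_fixed_point I hdvd hzero
  have hxN : (x : k[G]) = (x : k[G]).coeff 1 • ∑ g : G, single g (1 : k) :=
    eq_coeff_one_smul_sum_single_one fun g => congrArg Subtype.val (hx g)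
  have hc : (x : k[G]).coeff 1 ≠ 0 := by
    intro hc
    rw [hc, zero_smul] at hxN
    exact hx0 (Subtype.ext hxN.symm)
  rw [← inv_smul_smul₀ hc (∑ g : G, single g (1 : k)), ← hxN]
  exact I.smul_of_tower_mem _ x.2

/-- Let `p` be a prime and `G` a finite `p`-group. For any `𝔽_p[G]`-module `M` and any
`m ∈ M`, one has `N_G • m = 0` if and only if `m` is a torsion element, i.e. `h • m = 0`
for some nonzero `h` in the group algebra. -/
theorem stmt_0 (p : ℕ) [Fact p.Prime] (G : Type*) [Group G] [Fintype G]
    (hG : IsPGroup p G)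
    (M : Type*) [AddCommGroup M] [Module (MonoidAlgebra (ZMod p) G) M] (m : M) :
    (∑ g : G, MonoidAlgebra.single g (1 : ZMod p)) • m = 0 ↔
      ∃ h : MonoidAlgebra (ZMod p) G, h ≠ 0 ∧ h • m = 0 := by
  refine ⟨fun hN => ⟨_, sum_single_one_ne_zero, hN⟩, fun ⟨h, hh, hhm⟩ => ?_⟩
  have hann : LinearMap.ker (LinearMap.toSpanSingleton _ M m) ≠ ⊥ :=
    (Submodule.ne_bot_iff _).mpr ⟨h, hhm, hh⟩
  exact hG.sum_single_one_mem_of_ne_bot _ hann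
end

section
/- Let p be a prime, G a finite p-group, and M a finitely generated 𝔽_p[G]-module with a decomposition M ≅ 𝔽_p[G]^t ⊕ N in which N is a torsion 𝔽_p[G]-module. Then the image N_G(M) of the norm map m ↦ N_G·m is an 𝔽_p-vector space of dimension exactly t. -/
/-- A module over a ring is torsion if every element is killed by some nonzero scalar. -/
def IsTorsionModule (R M : Type*) [Semiring R] [AddCommMonoid M] [Module R M] : Prop :=
  ∀ m : M, ∃ r : R, r ≠ 0 ∧ r • m = 0

/-!
The norm element `ν = ∑ g, g` of `𝔽_p[G]` satisfies `ν * x = ε(x) • ν`, where `ε` is the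
augmentation, so `ν` maps each free summand `𝔽_p[G]` onto the line `𝔽_p ν`. For a `p`-group `G`,
a nonzero left ideal `𝔽_p[G] r` is a nontrivial finite `p`-group on which `G` acts by left
multiplication, hence contains a nonzero `G`-fixed element; the fixed elements of `𝔽_p[G]` are
the multiples of `ν`, so `ν ∈ 𝔽_p[G] r`. Hence `ν` kills every torsion module, and the image of
`ν` on `𝔽_p[G]^t × N` is `(𝔽_p ν)^t`, which has `p^t` elements.
-/

open MonoidAlgebra

namespace MonoidAlgebra

variable (k G : Type*) [CommSemiring k] [Group G] [Fintype G]

noncomputable def normElement : k[G] := ∑ g : G, of k G g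

variable {k G}

@[simp]
lemma coeff_normElement (g : G) : (normElement k G).coeff g = 1 := by
  simp [normElement, coeff_sum]

lemma normElement_ne_zero [Nontrivial k] : normElement k G ≠ 0 := fun h => by
  simpa [h] using coeff_normElement (k := k) (1 : G)

lemma normElement_mul_of (g : G) : normElement k G * of k G g = normElement k G := by
  ext h
  simp [coeff_mul_single_apply]

lemma normElement_mul (x : k[G]) :
    normElement k G * x = (∑ g, x.coeff g) • normElement k G := by
  classical
  induction x using MonoidAlgebra.induction_on with
  | of g => rw [normElement_mul_of]; simp [Finsupp.single_apply]
  | add x y hx hy => simp [mul_add, hx, hy, Finset.sum_add_distrib, add_smul]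
  | smul r x hx => simp [hx, Finset.mul_sum, smul_smul]

lemma eq_coeff_one_smul_normElement {x : k[G]} (hx : ∀ g, of k G g * x = x) :
    x = x.coeff 1 • normElement k G := by
  ext g
  simpa [coeff_single_mul_apply] using congr(($(hx g)).coeff g).symm

end MonoidAlgebra

lemma Representation.asAlgebraHom_normElement {k G V : Type*} [CommSemiring k] [Group G]
    [Fintype G] [AddCommMonoid V] [Module k V] (ρ : Representation k G V) :
    ρ.asAlgebraHom (normElement k G) = ρ.norm := by
  simp [normElement, Representation.norm]

lemma Module.finrank_eq_of_natCard_eq_pow {K V : Type*} [Field K] [Finite K] [AddCommGroup V]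
    [Module K V] {n : ℕ} (h : Nat.card V = Nat.card K ^ n) : Module.finrank K V = n := by
  have : Finite V := Nat.finite_of_card_ne_zero (h ▸ pow_ne_zero n Nat.card_pos.ne')
  rw [Module.natCard_eq_pow_finrank (K := K)] at h
  exact Nat.pow_right_injective Finite.one_lt_card h

namespace IsPGroup

variable {p : ℕ} [Fact p.Prime] {G : Type*} [Group G]

theorem exists_ne_zero_mem_invariants (hG : IsPGroup p G) {V : Type*} [AddCommGroup V]
    [Module (ZMod p) V] [Finite V] [Nontrivial V] (ρ : Representation (ZMod p) G V) :
    ∃ v ∈ ρ.invariants, v ≠ 0 := by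
  let _ : MulAction G V := MulAction.compHom V ρ
  have hp : p ∣ Nat.card V := by
    rw [Module.natCard_eq_pow_finrank (K := ZMod p), Nat.card_zmod]
    exact dvd_pow_self p Module.finrank_pos.ne'
  obtain ⟨v, hv, hv0⟩ :=
    hG.exists_fixed_point_of_prime_dvd_card_of_fixed_point V hp (a := 0) fun g => map_zero (ρ g)
  exact ⟨v, hv, hv0.symm⟩

variable [Fintype G]

theorem exists_mul_eq_normElement (hG : IsPGroup p G) {r : (ZMod p)[G]} (hr : r ≠ 0) :
    ∃ s, s * r = normElement (ZMod p) G := by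
  have hreg : ∀ g y, Representation.leftRegular (ZMod p) G g y = of _ G g * y := fun g y => by
    rw [← Representation.asAlgebraHom_of, Representation.asAlgebraHom_ofMulAction_smul_eq_mul]
  let I := LinearMap.range (LinearMap.mulRight (ZMod p) r)
  have hI : ∀ g, I ≤ I.comap (Representation.leftRegular (ZMod p) G g) := by
    rintro g _ ⟨a, rfl⟩
    exact ⟨of _ G g * a, by simp [hreg, mul_assoc]⟩
  have : Finite (ZMod p)[G] := Module.finite_of_finite (ZMod p)
  have : Nontrivial I := ⟨⟨⟨r, 1, one_mul r⟩, 0, by simpa [Subtype.ext_iff] using hr⟩⟩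
  obtain ⟨⟨_, a, rfl⟩, hy, hy0⟩ := hG.exists_ne_zero_mem_invariants (.subrepresentation _ I hI)
  have hfix : ∀ g, of _ G g * (a * r) = a * r := fun g => by
    simpa [Subtype.ext_iff, hreg] using hy g
  have hconst := eq_coeff_one_smul_normElement hfix
  set c := (a * r).coeff 1
  have hc : c ≠ 0 := fun hc => hy0 (by ext1; simpa [hc] using hconst)
  refine ⟨c⁻¹ • a, ?_⟩
  rw [smul_mul_assoc, hconst, smul_smul, inv_mul_cancel₀ hc, one_smul]

theorem normElement_smul_eq_zero (hG : IsPGroup p G) {M : Type*} [AddCommGroup M]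
    [Module (ZMod p)[G] M] {r : (ZMod p)[G]} (hr : r ≠ 0) {m : M} (hm : r • m = 0) :
    normElement (ZMod p) G • m = 0 := by
  obtain ⟨s, hs⟩ := hG.exists_mul_eq_normElement hr
  rw [← hs, mul_smul, hm, smul_zero]

theorem card_range_normElement_smul (hG : IsPGroup p G) {M N ι : Type*} [AddCommGroup M]
    [Module (ZMod p)[G] M] [AddCommGroup N] [Module (ZMod p)[G] N] [Fintype ι]
    (hN : IsTorsionModule (ZMod p)[G] N) (e : M ≃ₗ[(ZMod p)[G]] (ι → (ZMod p)[G]) × N) :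
    Nat.card (Set.range (normElement (ZMod p) G • · : M → M)) = p ^ Fintype.card ι := by
  set ν := normElement (ZMod p) G
  let embed : (ι → ZMod p) → M := fun c => e.symm (fun i => c i • ν, 0)
  have hembed : Function.Injective embed := fun c c' h => funext fun i =>
    smul_left_injective _ normElement_ne_zero congr(($(e.symm.injective h)).1 i)
  have hrange : Set.range (ν • · : M → M) = Set.range embed := by
    ext m
    constructor
    · rintro ⟨m, rfl⟩
      refine ⟨fun i => ∑ g, ((e m).1 i).coeff g, ?_⟩
      rw [e.symm_apply_eq, map_smul]
      obtain ⟨r, hr, hrm⟩ := hN (e m).2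
      ext i
      · simp [ν, normElement_mul]
      · exact (hG.normElement_smul_eq_zero hr hrm).symm
    · rintro ⟨c, rfl⟩
      refine ⟨e.symm (fun i => algebraMap (ZMod p) _ (c i), 0), ?_⟩
      change ν • e.symm _ = e.symm _
      rw [← map_smul]
      refine congrArg e.symm (Prod.ext (funext fun i => ?_) (smul_zero ν))
      exact (Algebra.commutes (c i) ν).symm.trans (Algebra.smul_def (c i) ν).symm
  rw [hrange, Nat.card_range_of_injective hembed, Nat.card_fun, Nat.card_zmod,
    Nat.card_eq_fintype_card]

end IsPGroup

theorem stmt_3_general (p : ℕ) [Fact p.Prime] (G : Type) [Group G] [Fintype G]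
    (hG : IsPGroup p G)
    (V : Type) [AddCommGroup V] [Module (ZMod p) V]
    (ρ : Representation (ZMod p) G V)
    (t : ℕ) (N : Type) [AddCommGroup N] [Module (MonoidAlgebra (ZMod p) G) N]
    (hN : IsTorsionModule (MonoidAlgebra (ZMod p) G) N)
    (e : ρ.asModule ≃ₗ[MonoidAlgebra (ZMod p) G]
      (Fin t → MonoidAlgebra (ZMod p) G) × N) :
    Module.finrank (ZMod p) (LinearMap.range (∑ g : G, ρ g)) = t := by
  have hnorm : ⇑(∑ g : G, ρ g) =
      ρ.asModuleEquiv ∘ (normElement (ZMod p) G • ·) ∘ ρ.asModuleEquiv.symm := by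
    ext v
    simp [Representation.asAlgebraHom_normElement, Representation.norm]
  apply Module.finrank_eq_of_natCard_eq_pow
  rw [Nat.card_zmod, ← SetLike.coe_sort_coe, LinearMap.coe_range, hnorm, Set.range_comp,
    ρ.asModuleEquiv.symm.surjective.range_comp,
    Nat.card_image_of_injective ρ.asModuleEquiv.injective, hG.card_range_normElement_smul hN e,
    Fintype.card_fin]

/-- Let `p` be a prime, `G` a finite `p`-group, and `M` a finitely generated
`𝔽_p[G]`-module with a decomposition `M ≅ 𝔽_p[G]^t ⊕ N` where `N` is torsion.
Then the image of the norm map `m ↦ N_G • m` is an `𝔽_p`-vector space of dimension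
exactly `t`. -/
theorem stmt_3 (p : ℕ) [Fact p.Prime] (G : Type) [Group G] [Fintype G]
    (hG : IsPGroup p G)
    (V : Type) [AddCommGroup V] [Module (ZMod p) V]
    (ρ : Representation (ZMod p) G V)
    [Module.Finite (MonoidAlgebra (ZMod p) G) ρ.asModule]
    (t : ℕ) (N : Type) [AddCommGroup N] [Module (MonoidAlgebra (ZMod p) G) N]
    (hN : IsTorsionModule (MonoidAlgebra (ZMod p) G) N)
    (e : ρ.asModule ≃ₗ[MonoidAlgebra (ZMod p) G]
      (Fin t → MonoidAlgebra (ZMod p) G) × N) :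
    Module.finrank (ZMod p) (LinearMap.range (∑ g : G, ρ g)) = t :=
  stmt_3_general p G hG V ρ t N hN e
end

section
/- Let p be a prime, Γ a finite p-group, and Γ' a normal subgroup of Γ. Let I_Γ denote the augmentation ideal of 𝔽_p[Γ] (the kernel of the augmentation map 𝔽_p[Γ] → 𝔽_p), and let k(Γ) denote the least positive integer n such that I_Γ^n = 0 (which exists, since I_Γ^{|Γ|} = 0 for a finite p-group). Then k(Γ) ≤ k(Γ/Γ') · k(Γ'). -/
/-- The augmentation ideal of the group algebra `𝔽_p[Γ]`, viewed as an
`𝔽_p`-subspace of the algebra (so that powers make sense also for noncommutative `Γ`). -/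
noncomputable def augIdeal (p : ℕ) [Fact p.Prime] (Γ : Type) [Monoid Γ] :
    Submodule (ZMod p) (MonoidAlgebra (ZMod p) Γ) :=
  LinearMap.ker (MonoidAlgebra.lift (ZMod p) (ZMod p) Γ (1 : Γ →* ZMod p)).toLinearMap

/-- `k(Γ)`: the least positive integer `n` with `I_Γ ^ n = 0`. -/
noncomputable def augNilIndex (p : ℕ) [Fact p.Prime] (Γ : Type) [Monoid Γ] : ℕ :=
  sInf {n : ℕ | 0 < n ∧ augIdeal p Γ ^ n = ⊥}

/-!
Let `π : 𝔽_p[Γ] → 𝔽_p[Γ/Γ']` and `Δ = span {n - 1 | n ∈ Γ'}`. Since `π` maps `I_Γ` into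
`I_{Γ/Γ'}`, we get `I_Γ ^ a ⊆ ker π = 𝔽_p[Γ] · Δ` for `a = k(Γ/Γ')`. Normality of `Γ'` gives
`Δ · 𝔽_p[Γ] ⊆ 𝔽_p[Γ] · Δ`, hence `(𝔽_p[Γ] · Δ) ^ b ⊆ 𝔽_p[Γ] · Δ ^ b`, and `Δ ^ b` is the image
of `I_{Γ'} ^ b = 0` for `b = k(Γ')`. So `I_Γ ^ (a * b) = 0`.

Nilpotency of `I_Γ` follows from the same estimate by induction on `|Γ|`, splitting off a central
subgroup `⟨g⟩` of order `p`: there `I = 𝔽_p[⟨g⟩] · (g - 1)` and `(g - 1) ^ p = g ^ p - 1 = 0`.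
-/

open MonoidAlgebra Submodule

section LeftIdeal

variable {R A : Type*} [CommSemiring R] [Semiring A] [Algebra R A]

theorem Submodule.top_mul_pow_le {T : Submodule R A} (hT : T * ⊤ ≤ ⊤ * T) :
    ∀ n : ℕ, (⊤ * T) ^ n ≤ ⊤ * T ^ n
  | 0 => by rw [pow_zero, pow_zero, mul_one]; exact le_top
  | n + 1 =>
    calc (⊤ * T) ^ (n + 1) ≤ ⊤ * T * (⊤ * T ^ n) := by
          rw [pow_succ']; gcongr; exact top_mul_pow_le hT n
      _ = ⊤ * (T * ⊤) * T ^ n := by simp only [mul_assoc]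
      _ ≤ ⊤ * (⊤ * T) * T ^ n := by gcongr
      _ = (⊤ * ⊤) * T ^ (n + 1) := by rw [pow_succ', mul_assoc, mul_assoc, mul_assoc]
      _ ≤ ⊤ * T ^ (n + 1) := by gcongr; exact le_top

theorem Submodule.pow_le_top_mul_pow {I T : Submodule R A} (hI : I ≤ ⊤ * T)
    (hT : T * ⊤ ≤ ⊤ * T) (n : ℕ) : I ^ n ≤ ⊤ * T ^ n :=
  (pow_le_pow_left' hI n).trans (top_mul_pow_le hT n)

end LeftIdeal

section MonoidAlgebra

variable {k G : Type*} [CommRing k] [Monoid G]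

theorem MonoidAlgebra.span_mul_top_le {S : Set (MonoidAlgebra k G)}
    (hS : ∀ s ∈ S, ∀ g : G, s * of k G g ∈ ⊤ * span k S) : span k S * ⊤ ≤ ⊤ * span k S := by
  rw [mul_le]
  rintro s hs y -
  induction y using MonoidAlgebra.induction_on with
  | of g =>
    induction hs using span_induction with
    | mem s hs => exact hS s hs g
    | zero => simp
    | add s t _ _ hs ht => rw [add_mul]; exact add_mem hs ht
    | smul r s _ hs => rw [smul_mul_assoc]; exact smul_mem _ r hs
  | add y z hy hz => rw [mul_add]; exact add_mem hy hz
  | smul r y hy => rw [mul_smul_comm]; exact smul_mem _ r hy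

variable (k) {Γ : Type*} [Group Γ] (N : Subgroup Γ)

noncomputable def augSpan : Submodule k (MonoidAlgebra k Γ) :=
  span k (Set.range fun n : N => of k Γ n - 1)

variable [N.Normal]

theorem augSpan_mul_top_le : augSpan k N * ⊤ ≤ ⊤ * augSpan k N := by
  refine span_mul_top_le ?_
  rintro _ ⟨n, rfl⟩ g
  have hconj : g⁻¹ * n * g ∈ N := by simpa using ‹N.Normal›.conj_mem _ n.2 g⁻¹
  have : (of k Γ n - 1) * of k Γ g = of k Γ g * (of k Γ (g⁻¹ * n * g) - 1) := by
    rw [sub_mul, mul_sub, one_mul, mul_one, ← map_mul, ← map_mul]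
    group
  rw [this]
  exact mul_mem_mul mem_top (subset_span ⟨⟨_, hconj⟩, rfl⟩)

theorem ker_mapDomain_mk_le :
    LinearMap.ker (mapDomainAlgHom k k (QuotientGroup.mk' N)).toLinearMap ≤ ⊤ * augSpan k N := by
  intro x hx
  set σ := mapDomainLinearMap k k (Quotient.out : Γ ⧸ N → Γ) ∘ₗ
    (mapDomainAlgHom k k (QuotientGroup.mk' N)).toLinearMap
  have key (y : MonoidAlgebra k Γ) : y - σ y ∈ ⊤ * augSpan k N := by
    induction y using MonoidAlgebra.induction_on with
    | of g =>
      set r := (QuotientGroup.mk g : Γ ⧸ N).out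
      have hr : r⁻¹ * g ∈ N := QuotientGroup.eq.mp (QuotientGroup.out_eq' _)
      have : of k Γ g - σ (of k Γ g) = of k Γ r * (of k Γ (r⁻¹ * g) - 1) := by
        simp [σ, mul_sub, r]
      rw [this]
      exact mul_mem_mul mem_top (subset_span ⟨⟨_, hr⟩, rfl⟩)
    | add y z hy hz => rw [map_add, add_sub_add_comm]; exact add_mem hy hz
    | smul c y hy => rw [map_smul, ← smul_sub]; exact smul_mem _ c hy
  have hσx : σ x = 0 := by rw [LinearMap.comp_apply, LinearMap.mem_ker.mp hx, map_zero]
  simpa [hσx] using key x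

end MonoidAlgebra

theorem Subgroup.normal_of_le_center {G : Type*} [Group G] {H : Subgroup G}
    (hH : H ≤ center G) : H.Normal :=
  ⟨fun n hn g => by rwa [mem_center_iff.mp (hH hn) g, mul_inv_cancel_right]⟩

theorem IsPGroup.exists_mem_center_orderOf_eq {p : ℕ} [Fact p.Prime] {G : Type*} [Group G]
    [Finite G] [Nontrivial G] (hG : IsPGroup p G) : ∃ g ∈ Subgroup.center G, orderOf g = p := by
  have hZ : p ∣ Nat.card (Subgroup.center G) :=
    (hG.to_subgroup _).card_eq_or_dvd.resolve_left
      (Finite.one_lt_card_iff_nontrivial.mpr hG.center_nontrivial).ne'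
  obtain ⟨g, hg⟩ := exists_prime_orderOf_dvd_card' p hZ
  exact ⟨g, g.2, by rwa [Subgroup.orderOf_coe]⟩

section AugmentationIdeal

variable (p : ℕ) [Fact p.Prime]

theorem of_sub_one_mem_augIdeal {Γ : Type} [Monoid Γ] (g : Γ) :
    of (ZMod p) Γ g - 1 ∈ augIdeal p Γ := by
  simp [augIdeal]

theorem augIdeal_eq_span (Γ : Type) [Monoid Γ] :
    augIdeal p Γ = span (ZMod p) (Set.range fun g : Γ => of (ZMod p) Γ g - 1) := by
  set ε := MonoidAlgebra.lift (ZMod p) (ZMod p) Γ (1 : Γ →* ZMod p)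
  refine le_antisymm (fun x hx => ?_) (span_le.mpr <| Set.range_subset_iff.mpr <|
    of_sub_one_mem_augIdeal p)
  have key (y : MonoidAlgebra (ZMod p) Γ) :
      y - ε y • 1 ∈ span (ZMod p) (Set.range fun g : Γ => of (ZMod p) Γ g - 1) := by
    induction y using MonoidAlgebra.induction_on with
    | of g => simpa [ε] using subset_span (Set.mem_range_self g)
    | add y z hy hz => rw [map_add, add_smul, add_sub_add_comm]; exact add_mem hy hz
    | smul r y hy => rw [map_smul, smul_assoc, ← smul_sub]; exact smul_mem _ r hy
  simpa [show ε x = 0 from hx] using key x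

theorem augIdeal_eq_bot_of_subsingleton (Γ : Type) [Monoid Γ] [Subsingleton Γ] :
    augIdeal p Γ = ⊥ := by
  rw [augIdeal_eq_span, span_eq_bot]
  rintro _ ⟨g, rfl⟩
  dsimp only
  rw [Subsingleton.elim g 1, map_one, sub_self]

theorem map_augIdeal {H Γ : Type} [Monoid H] [Monoid Γ] (f : H →* Γ) :
    (augIdeal p H).map (mapDomainAlgHom (ZMod p) (ZMod p) f).toLinearMap =
      span (ZMod p) (Set.range fun h : H => of (ZMod p) Γ (f h) - 1) := by
  rw [augIdeal_eq_span, map_span, ← Set.range_comp]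
  congr 2 with h
  simp [map_sub]

theorem map_augIdeal_le {H Γ : Type} [Monoid H] [Monoid Γ] (f : H →* Γ) :
    (augIdeal p H).map (mapDomainAlgHom (ZMod p) (ZMod p) f).toLinearMap ≤ augIdeal p Γ := by
  rw [map_augIdeal, augIdeal_eq_span]
  exact span_mono (Set.range_subset_iff.mpr fun h => ⟨f h, rfl⟩)

theorem augIdeal_pow_mul_eq_bot {Γ : Type} [Group Γ] (N : Subgroup Γ) [N.Normal] {a b : ℕ}
    (ha : augIdeal p (Γ ⧸ N) ^ a = ⊥) (hb : augIdeal p N ^ b = ⊥) :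
    augIdeal p Γ ^ (a * b) = ⊥ := by
  have hIa : augIdeal p Γ ^ a ≤ ⊤ * augSpan (ZMod p) N := by
    refine le_trans ?_ (ker_mapDomain_mk_le _ N)
    rw [LinearMap.le_ker_iff_map, ← le_bot_iff, ← ha, Submodule.map_pow]
    exact pow_le_pow_left' (map_augIdeal_le p _) a
  have hTb : augSpan (ZMod p) N ^ b = ⊥ := by
    have : augSpan (ZMod p) N = (augIdeal p N).map
        (mapDomainAlgHom (ZMod p) (ZMod p) N.subtype).toLinearMap := by
      rw [map_augIdeal]; rfl
    rw [this, ← Submodule.map_pow, hb, Submodule.map_bot]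
  rw [← le_bot_iff, pow_mul]
  simpa [hTb] using pow_le_top_mul_pow hIa (augSpan_mul_top_le _ N) b

theorem augIdeal_pow_eq_bot_of_isCyclic {Γ : Type} [Group Γ] [IsCyclic Γ] {n : ℕ}
    (hcard : Nat.card Γ = p ^ n) : augIdeal p Γ ^ (p ^ n) = ⊥ := by
  have : Finite Γ := Nat.finite_of_card_ne_zero (by simp [hcard, (Fact.out : p.Prime).ne_zero])
  obtain ⟨g, hg⟩ := IsCyclic.exists_generator (α := Γ)
  have hpow (h : Γ) : ∃ i : ℕ, g ^ i = h := mem_powers_iff_mem_zpowers.mpr (hg h)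
  set U := span (ZMod p) {of (ZMod p) Γ g - 1}
  have hIU : augIdeal p Γ ≤ ⊤ * U := by
    rw [augIdeal_eq_span, span_le, Set.range_subset_iff]
    intro h
    obtain ⟨i, rfl⟩ := hpow h
    rw [map_pow, ← geom_sum_mul]
    exact mul_mem_mul mem_top (subset_span rfl)
  have hUT : U * ⊤ ≤ ⊤ * U := by
    refine span_mul_top_le ?_
    rintro _ rfl h
    obtain ⟨i, rfl⟩ := hpow h
    rw [(Commute.sub_left ((Commute.self_pow g i).map (of (ZMod p) Γ)) (Commute.one_left _)).eq]
    exact mul_mem_mul mem_top (subset_span rfl)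
  have : CharP (MonoidAlgebra (ZMod p) Γ) p := charP_of_injective_algebraMap' (ZMod p) p
  have hUp : U ^ p ^ n = ⊥ := by
    rw [span_pow, Set.singleton_pow, sub_pow_char_pow_of_commute p n (Commute.one_right _),
      ← map_pow, ← hcard, pow_card_eq_one', map_one, one_pow, sub_self, span_zero_singleton]
  simpa [hUp] using pow_le_top_mul_pow hIU hUT (p ^ n)

theorem exists_augIdeal_pow_eq_bot {Γ : Type} [Group Γ] [Finite Γ]
    (hΓ : IsPGroup p Γ) : ∃ n, 0 < n ∧ augIdeal p Γ ^ n = ⊥ := by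
  induction hc : Nat.card Γ using Nat.strong_induction_on generalizing Γ with
  | _ c ih =>
  rcases subsingleton_or_nontrivial Γ with _ | _
  · exact ⟨1, one_pos, by rw [pow_one, augIdeal_eq_bot_of_subsingleton]⟩
  obtain ⟨g, hgZ, hg⟩ := hΓ.exists_mem_center_orderOf_eq
  have := Subgroup.normal_of_le_center (Subgroup.zpowers_le.mpr hgZ)
  have hcard : Nat.card (Subgroup.zpowers g) = p := by rw [Nat.card_zpowers, hg]
  have hlt : Nat.card (Γ ⧸ Subgroup.zpowers g) < c := by
    rw [← hc, ← (Subgroup.zpowers g).card_mul_index, hcard, Subgroup.index_eq_card]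
    exact lt_mul_left Nat.card_pos (Fact.out : p.Prime).one_lt
  obtain ⟨a, ha, hqa⟩ := ih _ hlt (hΓ.to_quotient _) rfl
  refine ⟨a * p, Nat.mul_pos ha (Fact.out : p.Prime).pos, augIdeal_pow_mul_eq_bot p _ hqa ?_⟩
  simpa using augIdeal_pow_eq_bot_of_isCyclic p (n := 1) (by rwa [pow_one])

theorem augNilIndex_spec {Γ : Type} [Group Γ] [Finite Γ]
    (hΓ : IsPGroup p Γ) : 0 < augNilIndex p Γ ∧ augIdeal p Γ ^ augNilIndex p Γ = ⊥ :=
  Nat.sInf_mem (exists_augIdeal_pow_eq_bot p hΓ)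

end AugmentationIdeal

/-- Let `p` be a prime, `Γ` a finite `p`-group and `Γ'` a normal subgroup.  The
augmentation ideal of `𝔽_p[Γ]` is nilpotent, and the nilpotency indices satisfy
`k(Γ) ≤ k(Γ/Γ') · k(Γ')`. -/
theorem stmt_9 (p : ℕ) [Fact p.Prime] (Γ : Type) [Group Γ] [Fintype Γ]
    (hΓ : IsPGroup p Γ) (Γ' : Subgroup Γ) [Γ'.Normal] :
    (∃ n : ℕ, 0 < n ∧ augIdeal p Γ ^ n = ⊥) ∧
      augNilIndex p Γ ≤ augNilIndex p (Γ ⧸ Γ') * augNilIndex p Γ' := by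
  obtain ⟨ha, hA⟩ := augNilIndex_spec p (hΓ.to_quotient Γ')
  obtain ⟨hb, hB⟩ := augNilIndex_spec p (hΓ.to_subgroup Γ')
  exact ⟨exists_augIdeal_pow_eq_bot p hΓ,
    Nat.sInf_le ⟨Nat.mul_pos ha hb, augIdeal_pow_mul_eq_bot p Γ' hA hB⟩⟩
end

section
/- Let K be a number field, p a prime, and V_∅ = {x ∈ K^× : x𝒪_K = I^p for some fractional ideal I of K}. Then the sequence 1 → 𝒪_K^×/(𝒪_K^×)^p → V_∅/(K^×)^p → Cl_K[p] → 1 is exact, where the first map is induced by the inclusion 𝒪_K^× ⊂ V_∅ and the second sends the class of x (with x𝒪_K = I^p) to the ideal class of I. Consequently, dim_{𝔽_p} V_∅/(K^×)^p = dim_{𝔽_p} 𝒪_K^×/(𝒪_K^×)^p + dim_{𝔽_p} Cl_K[p]. -/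
open NumberField

/-- The group `V_∅ = {x ∈ K^× : x𝒪_K = I^p for some fractional ideal I}`, as a
subgroup of `K^×`. -/
noncomputable def Vempty (p : ℕ) (K : Type*) [Field K] [NumberField K] : Subgroup Kˣ where
  carrier := {x : Kˣ | ∃ I : FractionalIdeal (nonZeroDivisors (𝓞 K)) K,
    FractionalIdeal.spanSingleton (nonZeroDivisors (𝓞 K)) (x : K) = I ^ p}
  one_mem' := ⟨1, by simp⟩
  mul_mem' := by
    rintro a b ⟨I, hI⟩ ⟨J, hJ⟩
    exact ⟨I * J, by
      rw [Units.val_mul, ← FractionalIdeal.spanSingleton_mul_spanSingleton, hI, hJ,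
        mul_pow]⟩
  inv_mem' := by
    rintro a ⟨I, hI⟩
    refine ⟨I⁻¹, ?_⟩
    rw [Units.val_inv_eq_inv_val, ← FractionalIdeal.spanSingleton_inv, hI, inv_pow]

/-! An element `x ∈ V_∅` determines the ideal `I` with `x𝒪_K = I^p` uniquely, since the group of
fractional ideals of a Dedekind domain is torsion-free (compare `v`-adic valuations); so
`x ↦ [I]` is a homomorphism `V_∅/(K^×)^p → Cl_K`. Its image is `Cl_K[p]`: if `[I]^p = 1` then
`I^p = x𝒪_K`. Its kernel consists of the classes of `u·y^p` with `u ∈ 𝒪_K^×`, and a unit that is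
a `p`-th power in `K` is the `p`-th power of a unit because `𝒪_K` is integrally closed.
The cardinality formula is then read off the resulting exact sequence. -/

open FractionalIdeal
open scoped nonZeroDivisors

section

variable {R K : Type*} [CommRing R] [Field K] [Algebra R K] [IsFractionRing R K]

theorem toPrincipalIdeal_eq_pow_iff {n : ℕ} {x : Kˣ} {I : (FractionalIdeal R⁰ K)ˣ} :
    toPrincipalIdeal R K x = I ^ n ↔ spanSingleton R⁰ (x : K) = (I : _) ^ n := by
  rw [toPrincipalIdeal_eq_iff, Units.val_pow_eq_pow_val]

theorem IsIntegrallyClosed.exists_eq_pow_of_units_map_eq_pow [IsIntegrallyClosed R] {n : ℕ}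
    (hn : n ≠ 0) {u : Rˣ} {y : Kˣ} (h : Units.map (algebraMap R K).toMonoidHom u = y ^ n) :
    ∃ w : Rˣ, u = w ^ n := by
  have hy : (y : K) ^ n = algebraMap R K u := by simpa using congrArg Units.val h.symm
  obtain ⟨z, hzy⟩ := IsIntegrallyClosed.exists_algebraMap_eq_of_isIntegral_pow
    (Nat.pos_of_ne_zero hn) (hy ▸ isIntegral_algebraMap)
  have hz : z ^ n = u := IsFractionRing.injective R K (by rw [map_pow, hzy, hy])
  have hunit : IsUnit z := (isUnit_pow_iff hn).mp (hz ▸ u.isUnit)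
  exact ⟨hunit.unit, Units.ext (by simp [hz])⟩

variable [IsDomain R]

theorem toPrincipalIdeal_eq_toPrincipalIdeal_iff {x y : Kˣ} :
    toPrincipalIdeal R K x = toPrincipalIdeal R K y ↔
      ∃ u : Rˣ, x = Units.map (algebraMap R K).toMonoidHom u * y := by
  rw [toPrincipalIdeal_eq_iff, coe_toPrincipalIdeal, spanSingleton_eq_spanSingleton]
  constructor
  · rintro ⟨u, hu⟩
    refine ⟨u⁻¹, Units.ext ?_⟩
    simp [← hu, Units.smul_def, Algebra.smul_def]
  · rintro ⟨u, rfl⟩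
    refine ⟨u⁻¹, ?_⟩
    simp [Units.smul_def, Algebra.smul_def]

theorem toPrincipalIdeal_units_map (u : Rˣ) :
    toPrincipalIdeal R K (Units.map (algebraMap R K).toMonoidHom u) = 1 := by
  rw [← map_one (toPrincipalIdeal R K), toPrincipalIdeal_eq_toPrincipalIdeal_iff]
  exact ⟨u, (mul_one _).symm⟩

theorem ClassGroup.mk_surjective : Function.Surjective (ClassGroup.mk (R := R) K) :=
  ClassGroup.induction K fun I => ⟨I, rfl⟩

theorem ClassGroup.mk_eq_one_iff_exists_toPrincipalIdeal {I : (FractionalIdeal R⁰ K)ˣ} :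
    ClassGroup.mk K I = 1 ↔ ∃ y : Kˣ, toPrincipalIdeal R K y = I := by
  rw [ClassGroup.mk_eq_one_iff, isPrincipal_iff, ← MonoidHom.mem_range, mem_principal_ideals_iff]
  simp only [eq_comm]

theorem ClassGroup.exists_toPrincipalIdeal_eq_pow_of_pow_eq_one {n : ℕ} {c : ClassGroup R}
    (hc : c ^ n = 1) : ∃ (x : Kˣ) (I : (FractionalIdeal R⁰ K)ˣ),
      toPrincipalIdeal R K x = I ^ n ∧ ClassGroup.mk K I = c := by
  obtain ⟨I, rfl⟩ := ClassGroup.mk_surjective (K := K) c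
  obtain ⟨x, hx⟩ := ClassGroup.mk_eq_one_iff_exists_toPrincipalIdeal.mp (by rwa [← map_pow] at hc)
  exact ⟨x, I, hx, rfl⟩

end

section

variable {R K : Type*} [CommRing R] [IsDedekindDomain R] [Field K] [Algebra R K]
  [IsFractionRing R K]

theorem FractionalIdeal.units_pow_left_injective {n : ℕ} (hn : n ≠ 0) :
    Function.Injective fun I : (FractionalIdeal R⁰ K)ˣ => I ^ n := by
  intro I J h
  have hcount (v : IsDedekindDomain.HeightOneSpectrum R) : count K v I = count K v J := by
    have := congrArg (count K v) (congrArg Units.val h)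
    simp only [Units.val_pow_eq_pow_val, count_pow] at this
    exact mul_left_cancel₀ (by exact_mod_cast hn) this
  refine Units.ext ?_
  rw [← finprod_heightOneSpectrum_factorization' K I.ne_zero,
    ← finprod_heightOneSpectrum_factorization' K J.ne_zero]
  simp only [hcount]

theorem ClassGroup.mk_eq_one_iff_of_toPrincipalIdeal_eq_pow {n : ℕ} (hn : n ≠ 0) {x : Kˣ}
    {I : (FractionalIdeal R⁰ K)ˣ} (h : toPrincipalIdeal R K x = I ^ n) :
    ClassGroup.mk K I = 1 ↔
      ∃ (u : Rˣ) (y : Kˣ), x = Units.map (algebraMap R K).toMonoidHom u * y ^ n := by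
  rw [ClassGroup.mk_eq_one_iff_exists_toPrincipalIdeal]
  constructor
  · rintro ⟨y, rfl⟩
    obtain ⟨u, hu⟩ := toPrincipalIdeal_eq_toPrincipalIdeal_iff.mp (h.trans (map_pow _ y n).symm)
    exact ⟨u, y, hu⟩
  · rintro ⟨u, y, rfl⟩
    refine ⟨y, units_pow_left_injective hn ?_⟩
    simp only [← h, map_mul, toPrincipalIdeal_units_map, one_mul, map_pow]

end

theorem MonoidHom.card_eq_card_quotient_ker_mul_card_range_of_range_eq_ker
    {U G H : Type*} [Group U] [Group G] [Group H] {ψ : U →* G} {φ : G →* H}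
    (hexact : ψ.range = φ.ker) :
    Nat.card G = Nat.card (U ⧸ ψ.ker) * Nat.card φ.range := by
  rw [Subgroup.card_eq_card_quotient_mul_card_subgroup φ.ker,
    Nat.card_congr (QuotientGroup.quotientKerEquivRange φ).toEquiv, ← hexact,
    Nat.card_congr (QuotientGroup.quotientKerEquivRange ψ).toEquiv, mul_comm]

namespace Vempty

variable {p : ℕ} {K : Type*} [Field K] [NumberField K]

theorem mem_iff [NeZero p] {x : Kˣ} : x ∈ Vempty p K ↔
    ∃ I : (FractionalIdeal (𝓞 K)⁰ K)ˣ, toPrincipalIdeal (𝓞 K) K x = I ^ p := by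
  constructor
  · rintro ⟨I, hI⟩
    have hI0 : I ≠ 0 := by
      rintro rfl
      rw [zero_pow (NeZero.ne p), spanSingleton_eq_zero_iff] at hI
      exact x.ne_zero hI
    exact ⟨Units.mk0 I hI0, toPrincipalIdeal_eq_pow_iff.mpr hI⟩
  · rintro ⟨I, hI⟩
    exact ⟨I, toPrincipalIdeal_eq_pow_iff.mp hI⟩

theorem units_map_mem (u : (𝓞 K)ˣ) : Units.map (algebraMap (𝓞 K) K).toMonoidHom u ∈ Vempty p K :=
  ⟨1, by rw [one_pow, ← coe_toPrincipalIdeal, toPrincipalIdeal_units_map, Units.val_one]⟩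

variable (p K) in
noncomputable abbrev powers : Subgroup (Vempty p K) :=
  (powMonoidHom p : Kˣ →* Kˣ).range.subgroupOf (Vempty p K)

noncomputable def unitsMap : (𝓞 K)ˣ →* Vempty p K ⧸ powers p K :=
  (QuotientGroup.mk' _).comp
    ((Units.map (algebraMap (𝓞 K) K).toMonoidHom).codRestrict _ units_map_mem)

variable [NeZero p]

noncomputable def idealRoot : Vempty p K →* (FractionalIdeal (𝓞 K)⁰ K)ˣ :=
  MonoidHom.mk' (fun x => (mem_iff.mp x.2).choose) fun x y =>
    units_pow_left_injective (NeZero.ne p) <| by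
      dsimp only
      rw [mul_pow, ← (mem_iff.mp x.2).choose_spec, ← (mem_iff.mp y.2).choose_spec,
        ← (mem_iff.mp (x * y).2).choose_spec, Subgroup.coe_mul, map_mul]

theorem toPrincipalIdeal_eq_idealRoot_pow (x : Vempty p K) :
    toPrincipalIdeal (𝓞 K) K x = idealRoot x ^ p :=
  (mem_iff.mp x.2).choose_spec

theorem idealRoot_eq {x : Vempty p K} {I : (FractionalIdeal (𝓞 K)⁰ K)ˣ}
    (h : toPrincipalIdeal (𝓞 K) K x = I ^ p) : idealRoot x = I :=
  units_pow_left_injective (NeZero.ne p) ((toPrincipalIdeal_eq_idealRoot_pow x).symm.trans h)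

noncomputable def classMap : Vempty p K ⧸ powers p K →* ClassGroup (𝓞 K) :=
  QuotientGroup.lift _ ((ClassGroup.mk K).comp idealRoot) fun x hx => by
    obtain ⟨y, hy⟩ := Subgroup.mem_subgroupOf.mp hx
    rw [MonoidHom.mem_ker, MonoidHom.comp_apply, idealRoot_eq (I := toPrincipalIdeal _ K y)
      (by rw [← hy, powMonoidHom_apply, map_pow])]
    exact ClassGroup.mk_eq_one_iff_exists_toPrincipalIdeal.mpr ⟨y, rfl⟩

theorem classMap_mk (x : Vempty p K) :
    classMap (x : Vempty p K ⧸ powers p K) = ClassGroup.mk K (idealRoot x) :=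
  rfl

theorem ker_unitsMap : (unitsMap : (𝓞 K)ˣ →* Vempty p K ⧸ powers p K).ker =
    (powMonoidHom p : (𝓞 K)ˣ →* (𝓞 K)ˣ).range := by
  ext u
  simp only [unitsMap, MonoidHom.mem_ker, MonoidHom.comp_apply, QuotientGroup.mk'_apply,
    QuotientGroup.eq_one_iff, Subgroup.mem_subgroupOf, MonoidHom.mem_range, powMonoidHom_apply,
    MonoidHom.codRestrict_apply]
  constructor
  · rintro ⟨y, hy⟩
    obtain ⟨w, hw⟩ := IsIntegrallyClosed.exists_eq_pow_of_units_map_eq_pow (NeZero.ne p) hy.symm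
    exact ⟨w, hw.symm⟩
  · rintro ⟨w, rfl⟩
    exact ⟨Units.map _ w, (map_pow _ w p).symm⟩

theorem range_unitsMap : (unitsMap : (𝓞 K)ˣ →* Vempty p K ⧸ powers p K).range = classMap.ker := by
  ext q
  induction q using QuotientGroup.induction_on with | H x => ?_
  rw [MonoidHom.mem_ker, classMap_mk, ClassGroup.mk_eq_one_iff_of_toPrincipalIdeal_eq_pow
    (NeZero.ne p) (toPrincipalIdeal_eq_idealRoot_pow x)]
  simp only [unitsMap, MonoidHom.mem_range, MonoidHom.comp_apply, QuotientGroup.mk'_apply,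
    QuotientGroup.eq, Subgroup.mem_subgroupOf, powMonoidHom_apply, Subgroup.coe_mul,
    Subgroup.coe_inv, MonoidHom.codRestrict_apply]
  exact exists_congr fun u => exists_congr fun y => by rw [eq_inv_mul_iff_mul_eq, eq_comm]

theorem mem_range_classMap {c : ClassGroup (𝓞 K)} :
    c ∈ (classMap : Vempty p K ⧸ powers p K →* _).range ↔ c ^ p = 1 := by
  constructor
  · rintro ⟨q, rfl⟩
    induction q using QuotientGroup.induction_on with | H x => ?_
    rw [classMap_mk, ← map_pow, ClassGroup.mk_eq_one_iff_exists_toPrincipalIdeal]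
    exact ⟨x, toPrincipalIdeal_eq_idealRoot_pow x⟩
  · intro hc
    obtain ⟨x, I, hx, rfl⟩ := ClassGroup.exists_toPrincipalIdeal_eq_pow_of_pow_eq_one (K := K) hc
    exact ⟨(⟨x, mem_iff.mpr ⟨I, hx⟩⟩ : Vempty p K), by rw [classMap_mk, idealRoot_eq hx]⟩

theorem card_quotient_powers : Nat.card (Vempty p K ⧸ powers p K) =
    Nat.card ((𝓞 K)ˣ ⧸ (powMonoidHom p : (𝓞 K)ˣ →* (𝓞 K)ˣ).range) *
      Nat.card {c : ClassGroup (𝓞 K) // c ^ p = 1} := by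
  rw [MonoidHom.card_eq_card_quotient_ker_mul_card_range_of_range_eq_ker range_unitsMap,
    ker_unitsMap]
  exact congrArg _ (Nat.card_congr (Equiv.subtypeEquivRight fun c => mem_range_classMap))

end Vempty

/-- Exactness of `1 → 𝒪_K^×/(𝒪_K^×)^p → V_∅/(K^×)^p → Cl_K[p] → 1`, stated
elementwise, together with the resulting relation between the cardinalities (i.e. the
`𝔽_p`-dimension formula `dim V_∅/(K^×)^p = dim 𝒪_K^×/(𝒪_K^×)^p + dim Cl_K[p]`). -/
theorem stmt_13 (p : ℕ) [Fact p.Prime] (K : Type) [Field K] [NumberField K] :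
    -- injectivity of 𝒪_K^×/(𝒪_K^×)^p → V_∅/(K^×)^p
    (∀ u : (𝓞 K)ˣ, (∃ y : Kˣ, (Units.map (algebraMap (𝓞 K) K).toMonoidHom u) = y ^ p) →
      ∃ w : (𝓞 K)ˣ, u = w ^ p) ∧
    -- exactness in the middle: x ∈ V_∅ with x𝒪_K = I^p has trivial image in Cl_K
    -- iff x ∈ 𝒪_K^× · (K^×)^p
    (∀ (x : Kˣ) (I : (FractionalIdeal (nonZeroDivisors (𝓞 K)) K)ˣ),
      FractionalIdeal.spanSingleton (nonZeroDivisors (𝓞 K)) (x : K) = (I : _) ^ p →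
      (ClassGroup.mk K I = 1 ↔
        ∃ (u : (𝓞 K)ˣ) (y : Kˣ), x = (Units.map (algebraMap (𝓞 K) K).toMonoidHom u) * y ^ p)) ∧
    -- surjectivity onto Cl_K[p]
    (∀ c : ClassGroup (𝓞 K), c ^ p = 1 →
      ∃ (x : Kˣ) (I : (FractionalIdeal (nonZeroDivisors (𝓞 K)) K)ˣ),
        FractionalIdeal.spanSingleton (nonZeroDivisors (𝓞 K)) (x : K) = (I : _) ^ p ∧
        ClassGroup.mk K I = c) ∧
    -- dimension (cardinality) formula
    Nat.card (Vempty p K ⧸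
        ((powMonoidHom p : Kˣ →* Kˣ).range.subgroupOf (Vempty p K)))
      = Nat.card ((𝓞 K)ˣ ⧸ (powMonoidHom p : (𝓞 K)ˣ →* (𝓞 K)ˣ).range)
        * Nat.card {c : ClassGroup (𝓞 K) // c ^ p = 1} := by
  have hp : p ≠ 0 := (Fact.out : p.Prime).ne_zero
  have : NeZero p := ⟨hp⟩
  refine ⟨fun u ⟨y, hy⟩ => IsIntegrallyClosed.exists_eq_pow_of_units_map_eq_pow hp hy,
    fun x I h => ClassGroup.mk_eq_one_iff_of_toPrincipalIdeal_eq_pow hp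
      (toPrincipalIdeal_eq_pow_iff.mpr h),
    fun c hc => ?_, Vempty.card_quotient_powers⟩
  obtain ⟨x, I, hx, hI⟩ := ClassGroup.exists_toPrincipalIdeal_eq_pow_of_pow_eq_one (K := K) hc
  exact ⟨x, I, toPrincipalIdeal_eq_pow_iff.mp hx, hI⟩
end
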